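/- For the real diamond Lie algebra g₄₄₂ (brackets [X,Y]=Z, [T,X]=−X, [T,Y]=Y), fix α,β,γ,δ ∈ ℝ with γ ≠ 0 and define for A = aX+bY+cZ+dT the function Ã_A(p,q) = (d + bγe^q)p + ae^{−q} + b(αβ−γδ)e^q + cγ on ℝ². Then {Ã_A, Ã_B} = Ã_{[A,B]} for the standard Poisson bracket on ℝ². -/

import Mathlib

/-- The Hamiltonian function on the generic orbit of the real diamond algebra
`g₄₄₂`, for `A = aX+bY+cZ+dT`:
`Ã_A(p,q) = (d + bγe^q)p + ae^{−q} + b(αβ−γδ)e^q + cγ`. -/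
noncomputable def Atil442 (α β γ δ : ℝ) (a b c d : ℝ) : ℝ → ℝ → ℝ := fun p q =>
  (d + b * γ * Real.exp q) * p + a * Real.exp (-q)
    + b * (α * β - γ * δ) * Real.exp q + c * γ

lemma derivP (α β γ δ a b c d q p : ℝ) :
    deriv (fun p' => Atil442 α β γ δ a b c d p' q) p = d + b * γ * Real.exp q := by
  have : (fun p' => Atil442 α β γ δ a b c d p' q)
      = fun p' => (d + b * γ * Real.exp q) * p'
        + (a * Real.exp (-q) + b * (α * β - γ * δ) * Real.exp q + c * γ) := by
    funext p'; simp [Atil442]; ring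
  rw [this]
  simpa using (((hasDerivAt_id p).const_mul (d + b * γ * Real.exp q)).add_const
    (a * Real.exp (-q) + b * (α * β - γ * δ) * Real.exp q + c * γ)).deriv

lemma derivQ (α β γ δ a b c d p q : ℝ) :
    deriv (fun q' => Atil442 α β γ δ a b c d p q') q
      = b * γ * Real.exp q * p - a * Real.exp (-q) + b * (α * β - γ * δ) * Real.exp q := by
  have h : HasDerivAt (fun q' => Atil442 α β γ δ a b c d p q')
      (b * γ * Real.exp q * p - a * Real.exp (-q) + b * (α * β - γ * δ) * Real.exp q) q := by
    have e1 : HasDerivAt (fun q' : ℝ => Real.exp q') (Real.exp q) q := Real.hasDerivAt_exp q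
    have e2 : HasDerivAt (fun q' : ℝ => Real.exp (-q')) (-Real.exp (-q)) q := by
      simpa [Function.comp_def] using (Real.hasDerivAt_exp (-q)).comp q ((hasDerivAt_id q).neg)
    have h1 : HasDerivAt (fun q' => (d + b * γ * Real.exp q') * p)
        (b * γ * Real.exp q * p) q := by
      simpa [mul_comm] using (((e1.const_mul (b * γ)).const_add d).mul_const p)
    have h2 : HasDerivAt (fun q' => a * Real.exp (-q')) (a * -Real.exp (-q)) q :=
      e2.const_mul a
    have h3 : HasDerivAt (fun q' => b * (α * β - γ * δ) * Real.exp q')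
        (b * (α * β - γ * δ) * Real.exp q) q := e1.const_mul _
    have := ((h1.add h2).add h3).add_const (c * γ)
    exact this.congr_deriv (by ring)
  exact h.deriv

/-- For the real diamond algebra `g₄₄₂` (brackets `[X,Y]=Z, [T,X]=−X, [T,Y]=Y`,
so `[A,B] = (d'a−da')X + (db'−d'b)Y + (ab'−a'b)Z`), and `γ ≠ 0`,
`{Ã_A, Ã_B} = Ã_{[A,B]}` for the standard Poisson bracket on ℝ². -/
theorem stmt_10 (α β γ δ : ℝ) (hγ : γ ≠ 0)
    (a b c d a' b' c' d' : ℝ) (p q : ℝ) :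
    deriv (fun p' => Atil442 α β γ δ a b c d p' q) p *
        deriv (fun q' => Atil442 α β γ δ a' b' c' d' p q') q
      - deriv (fun q' => Atil442 α β γ δ a b c d p q') q *
        deriv (fun p' => Atil442 α β γ δ a' b' c' d' p' q) p
      = Atil442 α β γ δ (d' * a - d * a') (d * b' - d' * b) (a * b' - a' * b) 0 p q := by
  rw [derivP, derivP, derivQ, derivQ]
  have hexp : Real.exp (-q) * Real.exp q = 1 := by
    rw [← Real.exp_add]; simp
  simp only [Atil442]
  linear_combination γ * (a * b' - a' * b) * hexp
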